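/- Let C_r be an (r,q)-completely transitive code over F_{q^r}: its automorphism group Aut_{(r,q)}(C_r) — generated by monomial matrices over F_{q^r} preserving C_r, field automorphisms of F_{q^r} preserving C_r, and F_q-vector-space automorphisms of F_{q^r} applied coordinatewise preserving C_r — has exactly ρ+1 orbits on the cosets of C_r, where ρ is the covering radius. Then C_r is completely regular. -/

import Mathlib

/-- Distance from a vector to a code (minimum Hamming distance to a codeword). -/
noncomputable def distToCode {n : ℕ} {K : Type*} [DecidableEq K] (C : Set (Fin n → K)) (v : Fin n → K) : ℕ :=
  sInf {d : ℕ | ∃ c ∈ C, hammingDist v c = d}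

/-- Covering radius of a code. -/
noncomputable def coveringRadius {n : ℕ} {K : Type*} [DecidableEq K] (C : Set (Fin n → K)) : ℕ :=
  sSup {d : ℕ | ∃ v : Fin n → K, distToCode C v = d}

/-- A code is completely regular. -/
def CompletelyRegular {n : ℕ} {K : Type*} [DecidableEq K] (C : Set (Fin n → K)) : Prop :=
  ∃ b c : ℕ → ℕ,
    (∀ (i : ℕ) (x : Fin n → K), distToCode C x = i →
      Nat.card {y : Fin n → K // hammingDist x y = 1 ∧ distToCode C y = i + 1} = b i) ∧
    (∀ (i : ℕ), 1 ≤ i → ∀ x : Fin n → K, distToCode C x = i →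
      Nat.card {y : Fin n → K // hammingDist x y = 1 ∧ distToCode C y = i - 1} = c i)

/-- `f` acts as a monomial matrix over `K`. -/
def IsMonomialMap {n : ℕ} {K : Type*} [Field K] (f : AddAut (Fin n → K)) : Prop :=
  ∃ (σ : Equiv.Perm (Fin n)) (d : Fin n → Kˣ), ∀ (x : Fin n → K) (j : Fin n),
    f x j = (d j : K) * x (σ j)

/-- `f` acts coordinatewise as a field automorphism of `K`. -/
def IsFieldAutMap {n : ℕ} {K : Type*} [Field K] (f : AddAut (Fin n → K)) : Prop :=
  ∃ g : K ≃+* K, ∀ (x : Fin n → K) (j : Fin n), f x j = g (x j)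

/-- `f` acts coordinatewise as an `F`-vector space automorphism of `K`. -/
def IsSemilinearMap (F : Type*) {n : ℕ} {K : Type*} [Field F] [Field K] [Algebra F K]
    (f : AddAut (Fin n → K)) : Prop :=
  ∃ g : K ≃ₗ[F] K, ∀ (x : Fin n → K) (j : Fin n), f x j = g (x j)

/-!
A permutation of `Fin n → K` that preserves Hamming distance and maps the code onto itself
preserves the distance to the code, hence the number of neighbours of a vector at each distance
from the code. Translations by codewords and the generators of the automorphism group are such
permutations, so cosets in one orbit are related by a composite of them and distance to the code is
constant on orbits. Since every distance `0, …, ρ` occurs, `ρ + 1` orbits leave room for only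
one orbit per distance: any two vectors at the same distance from the code are related by a
code isometry, so they have the same neighbour counts.
-/

section Distance

variable {n : ℕ} {K : Type*} [DecidableEq K] {C : Set (Fin n → K)}

theorem distToCode_le_hammingDist {v c : Fin n → K} (hc : c ∈ C) :
    distToCode C v ≤ hammingDist v c :=
  Nat.sInf_le ⟨c, hc, rfl⟩

theorem exists_hammingDist_eq_distToCode (hC : C.Nonempty) (v : Fin n → K) :
    ∃ c ∈ C, hammingDist v c = distToCode C v :=
  Nat.sInf_mem (hC.image (hammingDist v))

theorem distToCode_le_hammingDist_add (hC : C.Nonempty) (v w : Fin n → K) :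
    distToCode C v ≤ hammingDist v w + distToCode C w := by
  obtain ⟨c, hc, hwc⟩ := exists_hammingDist_eq_distToCode hC w
  calc distToCode C v ≤ hammingDist v c := distToCode_le_hammingDist hc
    _ ≤ hammingDist v w + hammingDist w c := hammingDist_triangle v w c
    _ = hammingDist v w + distToCode C w := by rw [hwc]

theorem distToCode_le_card (hC : C.Nonempty) (v : Fin n → K) : distToCode C v ≤ n := by
  obtain ⟨c, hc⟩ := hC
  calc distToCode C v ≤ hammingDist v c := distToCode_le_hammingDist hc
    _ ≤ Fintype.card (Fin n) := hammingDist_le_card_fintype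
    _ = n := Fintype.card_fin n

theorem exists_hammingDist_eq_one_of_hammingDist_eq_add_one {ι : Type*} [Fintype ι]
    [DecidableEq ι] {β : ι → Type*} [∀ i, DecidableEq (β i)] {v c : ∀ i, β i} {m : ℕ}
    (h : hammingDist v c = m + 1) : ∃ w, hammingDist v w = 1 ∧ hammingDist w c = m := by
  obtain ⟨j, hj⟩ : ∃ j, v j ≠ c j :=
    Function.ne_iff.1 (hammingDist_pos.1 (by omega))
  refine ⟨Function.update v j (c j), Finset.card_eq_one.2 ⟨j, ?_⟩, ?_⟩
  · ext i
    rcases eq_or_ne i j with rfl | hij <;> simp [*]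
  · have hsupp : ({i | Function.update v j (c j) i ≠ c i} : Finset ι) =
        ({i | v i ≠ c i} : Finset ι).erase j := by
      ext i
      rcases eq_or_ne i j with rfl | hij <;> simp [*]
    have hj' : j ∈ ({i | v i ≠ c i} : Finset ι) := by simpa using hj
    rw [hammingDist, hsupp, Finset.card_erase_of_mem hj']
    exact (congrArg (· - 1) h).trans (Nat.add_sub_cancel m 1)

theorem exists_distToCode_eq_of_distToCode_eq_add_one (hC : C.Nonempty) {v : Fin n → K}
    {m : ℕ} (hv : distToCode C v = m + 1) : ∃ w, distToCode C w = m := by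
  obtain ⟨c, hc, hvc⟩ := exists_hammingDist_eq_distToCode hC v
  obtain ⟨w, hvw, hwc⟩ := exists_hammingDist_eq_one_of_hammingDist_eq_add_one (hvc.trans hv)
  refine ⟨w, le_antisymm (hwc ▸ distToCode_le_hammingDist hc) ?_⟩
  have := distToCode_le_hammingDist_add hC v w
  omega

theorem exists_distToCode_eq_of_le (hC : C.Nonempty) {v : Fin n → K} {i : ℕ}
    (hi : i ≤ distToCode C v) : ∃ w, distToCode C w = i := by
  obtain ⟨k, hk⟩ := Nat.exists_eq_add_of_le hi
  induction k generalizing v with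
  | zero => exact ⟨v, hk⟩
  | succ k ih =>
    obtain ⟨w, hw⟩ := exists_distToCode_eq_of_distToCode_eq_add_one hC hk
    exact ih (hw ▸ Nat.le_add_right i k) hw

theorem range_distToCode (hC : C.Nonempty) :
    Set.range (distToCode C) = Set.Iic (coveringRadius C) := by
  have hbdd : BddAbove (Set.range (distToCode C)) :=
    ⟨n, Set.forall_mem_range.2 (distToCode_le_card hC)⟩
  ext i
  refine ⟨fun ⟨v, hv⟩ => hv ▸ le_csSup hbdd ⟨v, rfl⟩, fun hi => ?_⟩
  obtain ⟨v, hv⟩ : coveringRadius C ∈ Set.range (distToCode C) :=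
    Nat.sSup_mem ⟨_, hC.some, rfl⟩ hbdd
  exact exists_distToCode_eq_of_le hC (hv ▸ hi)

end Distance

section Isometry

variable {n : ℕ} {K : Type*} [DecidableEq K] {C : Set (Fin n → K)}

structure IsCodeIsometry (C : Set (Fin n → K)) (e : Equiv.Perm (Fin n → K)) : Prop where
  hammingDist_eq : ∀ x y, hammingDist (e x) (e y) = hammingDist x y
  apply_mem_iff : ∀ x, e x ∈ C ↔ x ∈ C

namespace IsCodeIsometry

variable {e f : Equiv.Perm (Fin n → K)}

theorem refl : IsCodeIsometry C (Equiv.refl _) :=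
  ⟨fun _ _ => rfl, fun _ => Iff.rfl⟩

theorem symm (he : IsCodeIsometry C e) : IsCodeIsometry C e.symm where
  hammingDist_eq x y := by
    rw [← he.hammingDist_eq, e.apply_symm_apply, e.apply_symm_apply]
  apply_mem_iff x := by rw [← he.apply_mem_iff, e.apply_symm_apply]

theorem trans (he : IsCodeIsometry C e) (hf : IsCodeIsometry C f) :
    IsCodeIsometry C (e.trans f) where
  hammingDist_eq x y := (hf.hammingDist_eq _ _).trans (he.hammingDist_eq x y)
  apply_mem_iff x := (hf.apply_mem_iff _).trans (he.apply_mem_iff x)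

theorem distToCode_apply (he : IsCodeIsometry C e) (v : Fin n → K) :
    distToCode C (e v) = distToCode C v := by
  unfold distToCode
  congr 1
  ext d
  constructor
  · rintro ⟨c, hc, rfl⟩
    obtain ⟨c, rfl⟩ := e.surjective c
    exact ⟨c, (he.apply_mem_iff c).1 hc, (he.hammingDist_eq v c).symm⟩
  · rintro ⟨c, hc, rfl⟩
    exact ⟨e c, (he.apply_mem_iff c).2 hc, he.hammingDist_eq v c⟩

theorem card_neighbours_apply (he : IsCodeIsometry C e) (x : Fin n → K) (j : ℕ) :
    Nat.card {y // hammingDist (e x) y = 1 ∧ distToCode C y = j} =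
      Nat.card {y // hammingDist x y = 1 ∧ distToCode C y = j} :=
  (Nat.card_congr (e.subtypeEquiv fun y => by
    rw [he.hammingDist_eq, he.distToCode_apply])).symm

end IsCodeIsometry

def CodeIsometric (C : Set (Fin n → K)) (x y : Fin n → K) : Prop :=
  ∃ e : Equiv.Perm (Fin n → K), IsCodeIsometry C e ∧ e x = y

theorem IsCodeIsometry.codeIsometric {e : Equiv.Perm (Fin n → K)} (he : IsCodeIsometry C e)
    (x : Fin n → K) : CodeIsometric C x (e x) :=
  ⟨e, he, rfl⟩

namespace CodeIsometric

variable {x y z : Fin n → K}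

theorem symm : CodeIsometric C x y → CodeIsometric C y x
  | ⟨e, he, hxy⟩ => ⟨e.symm, he.symm, e.symm_apply_eq.2 hxy.symm⟩

theorem trans : CodeIsometric C x y → CodeIsometric C y z → CodeIsometric C x z
  | ⟨e, he, hxy⟩, ⟨f, hf, hyz⟩ => ⟨e.trans f, he.trans hf, (congrArg f hxy).trans hyz⟩

theorem distToCode_eq : CodeIsometric C x y → distToCode C x = distToCode C y
  | ⟨_, he, hxy⟩ => hxy ▸ (he.distToCode_apply x).symm

end CodeIsometric

theorem completelyRegular_of_codeIsometric
    (h : ∀ x y, distToCode C x = distToCode C y → CodeIsometric C x y) :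
    CompletelyRegular C := by
  have hfactor (j : ℕ) : Function.FactorsThrough
      (fun x => Nat.card {y // hammingDist x y = 1 ∧ distToCode C y = j}) (distToCode C) := by
    intro x x' hxx'
    obtain ⟨e, he, rfl⟩ := h x x' hxx'
    exact (he.card_neighbours_apply x j).symm
  refine ⟨fun i => Function.extend (distToCode C) (fun x => Nat.card
      {y // hammingDist x y = 1 ∧ distToCode C y = i + 1}) 0 i,
    fun i => Function.extend (distToCode C) (fun x => Nat.card
      {y // hammingDist x y = 1 ∧ distToCode C y = i - 1}) 0 i,
    fun i x hx => ?_, fun i _ x hx => ?_⟩ <;>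
  · subst hx
    exact ((hfactor _).extend_apply _ x).symm

end Isometry

section Automorphisms

variable {n : ℕ} {K : Type*} [DecidableEq K]

def codeIsometryAddAut [Add K] (C : Set (Fin n → K)) : AddSubgroup (AddAut (Fin n → K)) where
  carrier := {f | IsCodeIsometry C f.toEquiv}
  add_mem' hf hg := hg.trans hf
  zero_mem' := IsCodeIsometry.refl
  neg_mem' hf := hf.symm

theorem isCodeIsometry_addRight [AddGroup K] {C : AddSubgroup (Fin n → K)} {c : Fin n → K}
    (hc : c ∈ C) : IsCodeIsometry (C : Set (Fin n → K)) (Equiv.addRight c) where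
  hammingDist_eq _ _ := hammingDist_comp (fun i a => a + c i) fun i => add_left_injective (c i)
  apply_mem_iff _ := C.add_mem_cancel_right hc

theorem codeIsometric_of_mk_eq [Ring K] (C : Submodule K (Fin n → K)) {x y : Fin n → K}
    (h : Submodule.Quotient.mk (p := C) x = Submodule.Quotient.mk y) :
    CodeIsometric (C : Set (Fin n → K)) x y :=
  ⟨Equiv.addRight (y - x),
    isCodeIsometry_addRight (C := C.toAddSubgroup) ((Submodule.Quotient.eq C).1 h.symm),
    add_sub_cancel x y⟩

theorem codeIsometric_of_eqvGen [Ring K] (C : Submodule K (Fin n → K))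
    {G : AddSubgroup (AddAut (Fin n → K))} (hG : G ≤ codeIsometryAddAut (C : Set (Fin n → K)))
    {rel : (Fin n → K) ⧸ C → (Fin n → K) ⧸ C → Prop}
    (hrel : ∀ D D', rel D D' → ∃ f ∈ G, ∃ v : Fin n → K,
      Submodule.Quotient.mk v = D ∧ Submodule.Quotient.mk (f v) = D')
    {D D' : (Fin n → K) ⧸ C} (h : Relation.EqvGen rel D D') {x x' : Fin n → K}
    (hx : Submodule.Quotient.mk x = D) (hx' : Submodule.Quotient.mk x' = D') :
    CodeIsometric (C : Set (Fin n → K)) x x' := by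
  induction h generalizing x x' with
  | rel D D' hDD' =>
    obtain ⟨f, hf, v, rfl, rfl⟩ := hrel D D' hDD'
    exact (codeIsometric_of_mk_eq C hx).trans
      (((hG hf).codeIsometric v).trans (codeIsometric_of_mk_eq C hx'.symm))
  | refl D => exact codeIsometric_of_mk_eq C (hx.trans hx'.symm)
  | symm D D' _ ih => exact (ih hx' hx).symm
  | trans D D' D'' _ _ ih ih' =>
    obtain ⟨y, rfl⟩ := Submodule.Quotient.mk_surjective C D'
    exact (ih hx rfl).trans (ih' rfl hx')

theorem hammingDist_comp_perm {ι β : Type*} [Fintype ι] [DecidableEq β] (σ : Equiv.Perm ι)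
    (x y : ι → β) : hammingDist (x ∘ σ) (y ∘ σ) = hammingDist x y :=
  Finset.card_equiv σ fun i => by simp

variable [Field K]

theorem IsMonomialMap.hammingDist_apply {f : AddAut (Fin n → K)} (hf : IsMonomialMap f)
    (x y : Fin n → K) : hammingDist (f x) (f y) = hammingDist x y := by
  obtain ⟨σ, d, hfd⟩ := hf
  rw [funext (hfd x), funext (hfd y)]
  exact (hammingDist_comp (fun j a => (d j : K) * a)
    fun j => mul_right_injective₀ (d j).ne_zero).trans (hammingDist_comp_perm σ x y)

theorem IsFieldAutMap.hammingDist_apply {f : AddAut (Fin n → K)} (hf : IsFieldAutMap f)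
    (x y : Fin n → K) : hammingDist (f x) (f y) = hammingDist x y := by
  obtain ⟨g, hg⟩ := hf
  rw [funext (hg x), funext (hg y)]
  exact hammingDist_comp (fun _ => g) fun _ => g.injective

theorem IsSemilinearMap.hammingDist_apply {F : Type*} [Field F] [Algebra F K]
    {f : AddAut (Fin n → K)} (hf : IsSemilinearMap F f) (x y : Fin n → K) :
    hammingDist (f x) (f y) = hammingDist x y := by
  obtain ⟨g, hg⟩ := hf
  rw [funext (hg x), funext (hg y)]
  exact hammingDist_comp (fun _ => g) fun _ => g.injective

theorem mem_codeIsometryAddAut {F : Type*} [Field F] [Algebra F K] {C : Set (Fin n → K)}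
    {f : AddAut (Fin n → K)} (hC : ∀ x, f x ∈ C ↔ x ∈ C)
    (hf : IsMonomialMap f ∨ IsFieldAutMap f ∨ IsSemilinearMap F f) :
    f ∈ codeIsometryAddAut C := by
  refine ⟨fun x y => ?_, hC⟩
  rcases hf with hf | hf | hf
  exacts [hf.hammingDist_apply x y, hf.hammingDist_apply x y, hf.hammingDist_apply x y]

end Automorphisms

theorem Quot.mk_eq_mk_of_card_eq_card_range {α β : Type*} {r : α → α → Prop} {d : α → β}
    (hd : ∀ a b, r a b → d a = d b) [Finite (Quot r)]
    (hcard : Nat.card (Quot r) = Nat.card (Set.range d)) {a b : α} (hab : d a = d b) :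
    Quot.mk r a = Quot.mk r b := by
  let φ : Quot r → Set.range d :=
    Quot.lift (Set.rangeFactorization d) fun a b h => Subtype.ext (hd a b h)
  have hφ : Function.Surjective φ := fun y =>
    let ⟨a, ha⟩ := Set.rangeFactorization_surjective y
    ⟨Quot.mk r a, ha⟩
  exact ((Nat.bijective_iff_surjective_and_card φ).2 ⟨hφ, hcard⟩).1
    (Subtype.ext hab : φ (Quot.mk r a) = φ (Quot.mk r b))

theorem rq_completely_transitive_implies_completely_regular_general {n : ℕ}
    (F K : Type) [Field F]
    [Field K] [DecidableEq K] [Algebra F K]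
    (C : Submodule K (Fin n → K))
    (G : AddSubgroup (AddAut (Fin n → K)))
    (hG : G = AddSubgroup.closure {f : AddAut (Fin n → K) |
      (∀ x : Fin n → K, f x ∈ C ↔ x ∈ C) ∧
      (IsMonomialMap f ∨ IsFieldAutMap f ∨ IsSemilinearMap F f)})
    (rel : ((Fin n → K) ⧸ C) → ((Fin n → K) ⧸ C) → Prop)
    (hrel : ∀ D D', rel D D' ↔ ∃ f ∈ G, ∃ v : Fin n → K,
      Submodule.Quotient.mk v = D ∧ Submodule.Quotient.mk (f v) = D')
    (horbits : Nat.card (Quot rel) = coveringRadius (C : Set (Fin n → K)) + 1) :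
    CompletelyRegular (C : Set (Fin n → K)) := by
  have hGC : G ≤ codeIsometryAddAut (C : Set (Fin n → K)) :=
    hG ▸ (AddSubgroup.closure_le _).2 fun f hf => mem_codeIsometryAddAut hf.1 hf.2
  have hiso {D D'} (h : Relation.EqvGen rel D D') {x x' : Fin n → K}
      (hx : Submodule.Quotient.mk x = D) (hx' : Submodule.Quotient.mk x' = D') :
      CodeIsometric (C : Set (Fin n → K)) x x' :=
    codeIsometric_of_eqvGen C hGC (fun D D' => (hrel D D').1) h hx hx'
  let d : (Fin n → K) ⧸ C → ℕ := fun D => distToCode (C : Set (Fin n → K)) (Quot.out D)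
  have hd (v : Fin n → K) : d (Submodule.Quotient.mk v) = distToCode (C : Set (Fin n → K)) v :=
    (hiso (.refl _) (Quot.out_eq _) rfl).distToCode_eq
  have hcard : Nat.card (Quot rel) = Nat.card (Set.range d) := by
    rw [horbits, ← (Submodule.Quotient.mk_surjective C).range_comp,
      show d ∘ Submodule.Quotient.mk = _ from funext hd,
      range_distToCode ⟨0, C.zero_mem⟩]
    simp
  have : Finite (Quot rel) := Nat.finite_of_card_ne_zero (by omega)
  refine completelyRegular_of_codeIsometric fun x x' h => hiso (Quot.eqvGen_exact
    (Quot.mk_eq_mk_of_card_eq_card_range (fun D D' h' => ?_) hcard ?_)) rfl rfl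
  · exact (hiso (.rel _ _ h') (Quot.out_eq D) (Quot.out_eq D')).distToCode_eq
  · rwa [hd, hd]

/-- If the group `Aut_{(r,q)}(C_r)` — generated by the monomial maps,
coordinatewise field automorphisms and coordinatewise `F_q`-linear automorphisms
preserving the code — has exactly `ρ+1` orbits on the cosets of `C_r`, then `C_r` is
completely regular. -/
theorem rq_completely_transitive_implies_completely_regular {n r : ℕ} (hr : 1 ≤ r)
    (F K : Type) [Field F] [Fintype F] [DecidableEq F]
    [Field K] [Fintype K] [DecidableEq K] [Algebra F K]
    (hrank : Module.finrank F K = r)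
    (C : Submodule K (Fin n → K))
    (G : AddSubgroup (AddAut (Fin n → K)))
    (hG : G = AddSubgroup.closure {f : AddAut (Fin n → K) |
      (∀ x : Fin n → K, f x ∈ C ↔ x ∈ C) ∧
      (IsMonomialMap f ∨ IsFieldAutMap f ∨ IsSemilinearMap F f)})
    (rel : ((Fin n → K) ⧸ C) → ((Fin n → K) ⧸ C) → Prop)
    (hrel : ∀ D D', rel D D' ↔ ∃ f ∈ G, ∃ v : Fin n → K,
      Submodule.Quotient.mk v = D ∧ Submodule.Quotient.mk (f v) = D')
    (horbits : Nat.card (Quot rel) = coveringRadius (C : Set (Fin n → K)) + 1) :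
    CompletelyRegular (C : Set (Fin n → K)) :=
  rq_completely_transitive_implies_completely_regular_general F K C G hG rel hrel horbits
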